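/- Let $(W_i)_{i \in [n]}$ be iid nonnegative random variables with regularly varying tail of index $-\alpha$, $\alpha > 1$: $\mathbb{P}(W > w) = L(w)w^{-\alpha}$ for $w \geq \underline{w} > 0$. For every $C > 0$ and $R > 0$ with $\mathbb{E}[W\mathbf{1}\{W \geq R\}] > 0$, there exists $\phi_0 > 0$ such that for all $\phi \in (0, \phi_0)$: $\mathbb{P}\big(\sum_{i=1}^n W_i \mathbf{1}\{W_i \in [R, \phi n)\} > 2\,\mathbb{E}[W\mathbf{1}\{W \geq R\}]\, n\big) = o(n^{-C})$ as $n \to \infty$. -/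

import Mathlib

/-!
Chernoff bound at `t = c log n / (φ n)`. A truncated summand `X` lies in `[0, φ n]`, so
`e^{tX} ≤ 1 + tX + t² n^c X²`, and `X² ≤ b X + (φ n)² 1{X > b}` with `b = n^β`. Regular variation
gives the Potter-type bound `P(W > b) = O(b^{-a})` for every `a < α`; for suitable `c, β` this
makes the mgf of the truncated sum at most `exp (t m n + o(1))`, where `m = E[W 1{W ≥ R}]`,
hence `P(S_n > 2 m n) ≤ e · n^{-c m / φ}`, which is `o(n^{-C})` once `φ < c m / C`.
-/

open MeasureTheory ProbabilityTheory Real Filter Finset Topology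

lemma exp_le_one_add_add_sq_mul_exp {x : ℝ} (hx : 0 ≤ x) : exp x ≤ 1 + x + x ^ 2 * exp x := by
  rcases le_or_gt x 1 with h | h
  · have := abs_le.1 (abs_exp_sub_one_sub_id_le (abs_le.2 ⟨by linarith, h⟩))
    nlinarith [one_le_exp hx]
  · nlinarith [mul_le_mul_of_nonneg_right (one_lt_pow₀ h two_ne_zero).le (exp_pos x).le]

lemma sq_le_mul_add_sq_mul_indicator {x b Λ : ℝ} (hx : 0 ≤ x) (hxΛ : x ≤ Λ) (hb : 0 < b) :
    x ^ 2 ≤ b * x + Λ ^ 2 * {y | b < y}.indicator 1 x := by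
  rcases le_or_gt x b with h | h
  · have : 0 ≤ Λ ^ 2 * {y | b < y}.indicator 1 x :=
      mul_nonneg (sq_nonneg Λ) (Set.indicator_nonneg (fun _ _ => zero_le_one) x)
    nlinarith
  · rw [Set.indicator_of_mem (show x ∈ {y | b < y} from h), Pi.one_apply]
    nlinarith

lemma exp_mul_le_of_nonneg_of_le {x t b Λ : ℝ} (hx : 0 ≤ x) (hxΛ : x ≤ Λ) (ht : 0 ≤ t)
    (hb : 0 < b) :
    exp (t * x) ≤ 1 + t * x + t ^ 2 * exp (t * Λ) * (b * x + Λ ^ 2 * {y | b < y}.indicator 1 x) :=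
  calc exp (t * x) ≤ 1 + t * x + (t * x) ^ 2 * exp (t * x) :=
        exp_le_one_add_add_sq_mul_exp (mul_nonneg ht hx)
    _ = 1 + t * x + t ^ 2 * exp (t * x) * x ^ 2 := by ring
    _ ≤ 1 + t * x + t ^ 2 * exp (t * Λ) * (b * x + Λ ^ 2 * {y | b < y}.indicator 1 x) := by
        gcongr
        exact sq_le_mul_add_sq_mul_indicator hx hxΛ hb

lemma le_mul_rpow_neg_of_antitone {T : ℝ → ℝ} {r a x₁ : ℝ} (hr : 1 < r) (ha : 0 ≤ a)
    (hx₁ : 0 < x₁) (hT : Antitone T) (hT₁ : 0 ≤ T x₁)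
    (hstep : ∀ y, x₁ ≤ y → T (r * y) ≤ r ^ (-a) * T y) {x : ℝ} (hx : x₁ ≤ x) :
    T x ≤ T x₁ * (r * x₁) ^ a * x ^ (-a) := by
  have hr0 : 0 < r := one_pos.trans hr
  have hgeom : ∀ k : ℕ, T (r ^ k * x₁) ≤ (r ^ k) ^ (-a) * T x₁ := by
    intro k
    induction k with
    | zero => simp
    | succ k ih =>
      calc T (r ^ (k + 1) * x₁) = T (r * (r ^ k * x₁)) := by ring_nf
        _ ≤ r ^ (-a) * T (r ^ k * x₁) :=
          hstep _ (le_mul_of_one_le_left hx₁.le (one_le_pow₀ hr.le))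
        _ ≤ r ^ (-a) * ((r ^ k) ^ (-a) * T x₁) := by gcongr
        _ = (r ^ (k + 1)) ^ (-a) * T x₁ := by
          rw [pow_succ, mul_rpow (by positivity) hr0.le]; ring
  obtain ⟨k, hk, hk'⟩ := exists_nat_pow_near ((one_le_div hx₁).2 hx) hr
  have hx0 : 0 < x := hx₁.trans_le hx
  calc T x ≤ T (r ^ k * x₁) := hT ((le_div_iff₀ hx₁).1 hk)
    _ ≤ (r ^ k) ^ (-a) * T x₁ := hgeom k
    _ ≤ (x / (r * x₁)) ^ (-a) * T x₁ := by
        refine mul_le_mul_of_nonneg_right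
          (rpow_le_rpow_of_nonpos (div_pos hx0 (by positivity)) ?_ (neg_nonpos.2 ha)) hT₁
        rw [div_le_iff₀ (by positivity), ← mul_assoc, ← pow_succ]
        exact ((div_lt_iff₀ hx₁).1 hk').le
    _ = T x₁ * (r * x₁) ^ a * x ^ (-a) := by
        rw [div_rpow hx0.le (by positivity), rpow_neg hx0.le, rpow_neg (by positivity)]
        field_simp

lemma eventually_le_rpow_neg_mul_of_tendsto {T L : ℝ → ℝ} {α a r w₀ : ℝ} (hr : 1 < r)
    (haα : a < α) (hLpos : ∀ x, 0 < L x) (hL : Tendsto (fun x => L (r * x) / L x) atTop (𝓝 1))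
    (hTL : ∀ x, w₀ ≤ x → T x = L x * x ^ (-α)) :
    ∀ᶠ y in atTop, T (r * y) ≤ r ^ (-a) * T y := by
  filter_upwards [hL.eventually_le_const (one_lt_rpow hr (sub_pos.2 haα)),
    eventually_ge_atTop w₀, eventually_gt_atTop 0] with y hL hyw hy
  rw [div_le_iff₀ (hLpos y)] at hL
  have hry : w₀ ≤ r * y := hyw.trans (le_mul_of_one_le_left hy.le hr.le)
  rw [hTL _ hry, hTL _ hyw, mul_rpow (by linarith) hy.le]
  calc L (r * y) * (r ^ (-α) * y ^ (-α)) ≤ r ^ (α - a) * L y * (r ^ (-α) * y ^ (-α)) := by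
        gcongr
    _ = r ^ (α - a + -α) * (L y * y ^ (-α)) := by rw [rpow_add (by linarith)]; ring
    _ = r ^ (-a) * (L y * y ^ (-α)) := by ring_nf

lemma exists_eventually_le_mul_rpow_neg {T L : ℝ → ℝ} {α a r w₀ : ℝ} (hr : 1 < r)
    (ha : 0 ≤ a) (haα : a < α) (hT : Antitone T) (hT0 : ∀ x, 0 ≤ T x) (hLpos : ∀ x, 0 < L x)
    (hL : Tendsto (fun x => L (r * x) / L x) atTop (𝓝 1))
    (hTL : ∀ x, w₀ ≤ x → T x = L x * x ^ (-α)) :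
    ∃ K, ∀ᶠ x in atTop, T x ≤ K * x ^ (-a) := by
  obtain ⟨x₀, hx₀⟩ :=
    eventually_atTop.1 (eventually_le_rpow_neg_mul_of_tendsto hr haα hLpos hL hTL)
  refine ⟨T (max x₀ 1) * (r * max x₀ 1) ^ a, eventually_atTop.2 ⟨max x₀ 1, fun x hx => ?_⟩⟩
  exact le_mul_rpow_neg_of_antitone hr ha (by positivity) hT (hT0 _)
    (fun y hy => hx₀ y ((le_max_left _ _).trans hy)) hx

lemma tendsto_log_sq_mul_rpow_of_neg {δ : ℝ} (hδ : δ < 0) :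
    Tendsto (fun x => log x ^ 2 * x ^ δ) atTop (𝓝 0) := by
  refine (isLittleO_log_rpow_rpow_atTop 2 (neg_pos.2 hδ)).tendsto_div_nhds_zero.congr' ?_
  filter_upwards [eventually_gt_atTop 0] with x hx
  rw [rpow_two, rpow_neg hx.le, div_inv_eq_mul]

/-- `n t² e^{tΛ} (b m + Λ² K b^{-a})` at `n = x`, `t = c log x / (φ x)`, `Λ = φ x`, `b = x^β`
(so that `e^{tΛ} = x^c`): the quadratic correction to the Chernoff exponent. -/
lemma tendsto_chernoff_error {a c β φ m K : ℝ} (hφ : φ ≠ 0) (hβc : β + c < 1)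
    (hcβ : 1 + c < a * β) :
    Tendsto (fun x => x * ((c * log x / (φ * x)) ^ 2 * x ^ c *
      (x ^ β * m + (φ * x) ^ 2 * (K * (x ^ β) ^ (-a))))) atTop (𝓝 0) := by
  have h := ((tendsto_log_sq_mul_rpow_of_neg (sub_neg.2 hβc)).const_mul (c ^ 2 * m / φ ^ 2)).add
    ((tendsto_log_sq_mul_rpow_of_neg (sub_neg.2 hcβ)).const_mul (c ^ 2 * K))
  rw [mul_zero, mul_zero, add_zero] at h
  refine h.congr' ?_
  filter_upwards [eventually_gt_atTop 0] with x hx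
  rw [rpow_sub hx, rpow_sub hx, rpow_add hx, rpow_add hx, rpow_one, ← rpow_mul hx.le,
    mul_neg, rpow_neg hx.le, mul_comm β a]
  field_simp

lemma exists_chernoff_exponents {α : ℝ} (hα : 1 < α) :
    ∃ a c β : ℝ, 0 ≤ a ∧ a < α ∧ 0 < c ∧ 0 < β ∧ β + c < 1 ∧ 1 + c < a * β := by
  obtain ⟨a, ha, haα⟩ : ∃ a, 1 < a ∧ a < α := ⟨(1 + α) / 2, by linarith, by linarith⟩
  set c := (a - 1) / (4 * a)
  have hc : 0 < c := div_pos (by linarith) (by linarith)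
  have hc₁ : c < 1 / 4 := by rw [div_lt_iff₀ (by linarith)]; linarith
  have hc₂ : c < (a - 1) / 2 := div_lt_div_of_pos_left (by linarith) two_pos (by linarith)
  have hβ : a * (1 - 2 * c) = (a + 1) / 2 := by simp only [c]; field_simp; ring
  exact ⟨a, c, 1 - 2 * c, by linarith, haα, hc, by linarith, by linarith, by linarith⟩

section Chernoff

variable {Ω : Type*} [MeasurableSpace Ω] {μ : Measure Ω} [IsProbabilityMeasure μ]

lemma integrable_exp_mul_of_le {X : Ω → ℝ} {Λ t : ℝ} (hX : Measurable X) (hΛ : ∀ ω, X ω ≤ Λ)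
    (ht : 0 ≤ t) : Integrable (fun ω => exp (t * X ω)) μ :=
  .of_bound (hX.const_mul t).exp.aestronglyMeasurable (exp (t * Λ)) (ae_of_all _ fun ω => by
    rw [Real.norm_of_nonneg (exp_pos _).le]
    exact exp_le_exp.2 (mul_le_mul_of_nonneg_left (hΛ ω) ht))

lemma mgf_le_of_nonneg_of_le {X : Ω → ℝ} {Λ t b : ℝ} (hX : Measurable X) (h0 : ∀ ω, 0 ≤ X ω)
    (hΛ : ∀ ω, X ω ≤ Λ) (ht : 0 ≤ t) (hb : 0 < b) :
    mgf X μ t ≤ 1 + t * μ[X] + t ^ 2 * exp (t * Λ) * (b * μ[X] + Λ ^ 2 * μ.real {ω | b < X ω}) := by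
  have hXint : Integrable X μ :=
    .of_bound hX.aestronglyMeasurable Λ (ae_of_all _ fun ω => by
      rw [Real.norm_of_nonneg (h0 ω)]; exact hΛ ω)
  have hset : MeasurableSet {ω | b < X ω} := measurableSet_lt measurable_const hX
  have hIint : Integrable ({ω | b < X ω}.indicator (1 : Ω → ℝ)) μ :=
    (integrable_const 1).indicator hset
  calc mgf X μ t
      ≤ ∫ ω, (1 + t * X ω + t ^ 2 * exp (t * Λ) *
          (b * X ω + Λ ^ 2 * {ω | b < X ω}.indicator 1 ω)) ∂μ := by
        refine integral_mono (integrable_exp_mul_of_le hX hΛ ht) ?_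
          fun ω => exp_mul_le_of_nonneg_of_le (h0 ω) (hΛ ω) ht hb
        exact ((integrable_const 1).add (hXint.const_mul t)).add
          (((hXint.const_mul b).add (hIint.const_mul _)).const_mul _)
    _ = _ := by
        rw [integral_add, integral_add, integral_const_mul, integral_const_mul, integral_add,
          integral_const_mul, integral_const_mul, integral_indicator_one hset]
        · simp
        all_goals fun_prop

lemma measureReal_sum_ge_le_of_iIndepFun {X : ℕ → Ω → ℝ} {Λ t b : ℝ}
    (hX : ∀ i, Measurable (X i)) (hindep : iIndepFun X μ)
    (hident : ∀ i, IdentDistrib (X i) (X 0) μ μ) (h0 : ∀ i ω, 0 ≤ X i ω)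
    (hΛ : ∀ i ω, X i ω ≤ Λ) (ht : 0 ≤ t) (hb : 0 < b) (s : ℝ) (n : ℕ) :
    μ.real {ω | s ≤ ∑ i ∈ range n, X i ω} ≤ exp (-t * s + n * (t * μ[X 0] +
      t ^ 2 * exp (t * Λ) * (b * μ[X 0] + Λ ^ 2 * μ.real {ω | b < X 0 ω}))) := by
  set D := t ^ 2 * exp (t * Λ) * (b * μ[X 0] + Λ ^ 2 * μ.real {ω | b < X 0 ω})
  have hmgf_sum : mgf (∑ i ∈ range n, X i) μ t = mgf (X 0) μ t ^ n := by
    rw [hindep.mgf_sum hX, prod_congr rfl fun i _ => mgf_congr_of_identDistrib _ _ (hident i) t,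
      prod_const, card_range]
  have hmgf : mgf (X 0) μ t ≤ 1 + t * μ[X 0] + D :=
    mgf_le_of_nonneg_of_le (hX 0) (h0 0) (hΛ 0) ht hb
  calc μ.real {ω | s ≤ ∑ i ∈ range n, X i ω}
      ≤ exp (-t * s) * mgf (∑ i ∈ range n, X i) μ t := by
        simpa only [Finset.sum_apply] using measure_ge_le_exp_mul_mgf s ht
          (hindep.integrable_exp_mul_sum (s := range n) hX fun i _ =>
            integrable_exp_mul_of_le (hX i) (hΛ i) ht)
    _ ≤ exp (-t * s) * exp (t * μ[X 0] + D) ^ n := by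
        rw [hmgf_sum]
        gcongr
        · exact mgf_nonneg
        · exact hmgf.trans (by linarith [add_one_le_exp (t * μ[X 0] + D)])
    _ = exp (-t * s + n * (t * μ[X 0] + D)) := by rw [← exp_nat_mul, ← exp_add]

lemma measureReal_truncatedSum_ge_le {W : ℕ → Ω → ℝ} {R Λ t b m p : ℝ}
    (hW : ∀ i, Measurable (W i)) (hindep : iIndepFun W μ)
    (hident : ∀ i, μ.map (W i) = μ.map (W 0)) (hR : 0 ≤ R) (hΛ : 0 ≤ Λ) (ht : 0 ≤ t)
    (hb : 0 < b) (hint : Integrable (fun ω => if R ≤ W 0 ω then W 0 ω else 0) μ)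
    (hm : ∫ ω, (if R ≤ W 0 ω then W 0 ω else 0) ∂μ ≤ m) (hp : μ.real {ω | b < W 0 ω} ≤ p)
    (s : ℝ) (n : ℕ) :
    μ.real {ω | s ≤ ∑ i ∈ range n, if R ≤ W i ω ∧ W i ω < Λ then W i ω else 0} ≤
      exp (-t * s + n * (t * m + t ^ 2 * exp (t * Λ) * (b * m + Λ ^ 2 * p))) := by
  set f : ℝ → ℝ := fun x => if R ≤ x ∧ x < Λ then x else 0
  have hf : Measurable f :=
    Measurable.ite ((measurableSet_le measurable_const measurable_id).inter
      (measurableSet_lt measurable_id measurable_const)) measurable_id measurable_const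
  have hf0 : ∀ x, 0 ≤ f x := fun x => by
    simp only [f]; split_ifs with h; exacts [hR.trans h.1, le_rfl]
  have hfΛ : ∀ x, f x ≤ Λ := fun x => by
    simp only [f]; split_ifs with h; exacts [h.2.le, hΛ]
  have hf_le : ∀ x, f x ≤ if R ≤ x then x else 0 := fun x => by
    simp only [f]; split_ifs with h h' h'; exacts [le_rfl, absurd h.1 h', hR.trans h', le_rfl]
  have hf_gt : ∀ x, b < f x → b < x := fun x hx => by
    simp only [f] at hx; split_ifs at hx; exacts [hx, absurd hx (not_lt.2 hb.le)]
  have hident' : ∀ i, IdentDistrib (fun ω => f (W i ω)) (fun ω => f (W 0 ω)) μ μ := fun i =>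
    (IdentDistrib.mk (hW i).aemeasurable (hW 0).aemeasurable (hident i)).comp hf
  calc μ.real {ω | s ≤ ∑ i ∈ range n, f (W i ω)}
      ≤ exp (-t * s + n * (t * μ[fun ω => f (W 0 ω)] + t ^ 2 * exp (t * Λ) *
          (b * μ[fun ω => f (W 0 ω)] + Λ ^ 2 * μ.real {ω | b < f (W 0 ω)}))) :=
        measureReal_sum_ge_le_of_iIndepFun (fun i => hf.comp (hW i))
          (hindep.comp (fun _ => f) fun _ => hf) hident' (fun _ _ => hf0 _)
          (fun _ _ => hfΛ _) ht hb s n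
    _ ≤ exp (-t * s + n * (t * m + t ^ 2 * exp (t * Λ) * (b * m + Λ ^ 2 * p))) := by
        have hmean : μ[fun ω => f (W 0 ω)] ≤ m := by
          refine le_trans (integral_mono ?_ hint fun ω => hf_le _) hm
          exact .of_bound (hf.comp (hW 0)).aestronglyMeasurable Λ (ae_of_all _ fun ω => by
            rw [Real.norm_of_nonneg (hf0 _)]; exact hfΛ _)
        have htail : μ.real {ω | b < f (W 0 ω)} ≤ p :=
          (measureReal_mono fun ω hω => hf_gt _ hω).trans hp
        gcongr

lemma measureReal_truncatedSum_gt_le {W : ℕ → Ω → ℝ} {R m a c β φ K : ℝ} {n : ℕ}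
    (hW : ∀ i, Measurable (W i)) (hindep : iIndepFun W μ)
    (hident : ∀ i, μ.map (W i) = μ.map (W 0)) (hR : 0 ≤ R)
    (hint : Integrable (fun ω => if R ≤ W 0 ω then W 0 ω else 0) μ)
    (hm : ∫ ω, (if R ≤ W 0 ω then W 0 ω else 0) ∂μ ≤ m) (hc : 0 ≤ c) (hφ : 0 < φ) (hn : 0 < n)
    (htail : μ.real {ω | (n : ℝ) ^ β < W 0 ω} ≤ K * ((n : ℝ) ^ β) ^ (-a))
    (herr : n * ((c * log n / (φ * n)) ^ 2 * (n : ℝ) ^ c *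
      ((n : ℝ) ^ β * m + (φ * n) ^ 2 * (K * ((n : ℝ) ^ β) ^ (-a)))) ≤ 1) :
    μ.real {ω | 2 * m * n < ∑ i ∈ range n, if R ≤ W i ω ∧ W i ω < φ * n then W i ω else 0} ≤
      exp 1 * (n : ℝ) ^ (-(c * m / φ)) := by
  have hN : (0 : ℝ) < n := Nat.cast_pos.2 hn
  set t := c * log n / (φ * n)
  have hexp : exp (t * (φ * n)) = (n : ℝ) ^ c := by
    rw [div_mul_cancel₀ _ (by positivity), rpow_def_of_pos hN, mul_comm]
  calc μ.real {ω | 2 * m * n < ∑ i ∈ range n, if R ≤ W i ω ∧ W i ω < φ * n then W i ω else 0}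
      ≤ μ.real {ω | 2 * m * n ≤ ∑ i ∈ range n,
          if R ≤ W i ω ∧ W i ω < φ * n then W i ω else 0} :=
        measureReal_mono (Set.ofPred_subset_ofPred.2 fun _ hω => hω.le)
    _ ≤ exp (-t * (2 * m * n) + n * (t * m + t ^ 2 * exp (t * (φ * n)) *
          ((n : ℝ) ^ β * m + (φ * n) ^ 2 * (K * ((n : ℝ) ^ β) ^ (-a))))) :=
        measureReal_truncatedSum_ge_le hW hindep hident hR (by positivity) (by positivity)
          (by positivity) hint hm htail _ n
    _ = exp (-(c * m / φ) * log n + n * (t ^ 2 * (n : ℝ) ^ c *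
          ((n : ℝ) ^ β * m + (φ * n) ^ 2 * (K * ((n : ℝ) ^ β) ^ (-a))))) := by
        rw [hexp]; congr 1; simp only [t]; field_simp; ring
    _ ≤ exp (-(c * m / φ) * log n + 1) := by gcongr
    _ = exp 1 * (n : ℝ) ^ (-(c * m / φ)) := by
        rw [exp_add, rpow_def_of_pos hN, mul_comm (log _), mul_comm]

end Chernoff

theorem stmt_18_general {Ω : Type*} [MeasurableSpace Ω] (μ : Measure Ω) [IsProbabilityMeasure μ]
    (W : ℕ → Ω → ℝ) (hmeas : ∀ i, Measurable (W i))
    (hindep : ProbabilityTheory.iIndepFun W μ)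
    (hident : ∀ i, Measure.map (W i) μ = Measure.map (W 0) μ)
    (α w₀ : ℝ) (hα : 1 < α)
    (L : ℝ → ℝ) (hLpos : ∀ x : ℝ, 0 < L x)
    (hL : ∀ c : ℝ, 0 < c →
        Filter.Tendsto (fun x : ℝ => L (c * x) / L x) Filter.atTop (nhds 1))
    (htail : ∀ w : ℝ, w₀ ≤ w → (μ {ω | w < W 0 ω}).toReal = L w * w ^ (-α))
    (C R : ℝ) (hC : 0 < C) (hR : 0 < R)
    (hpos : 0 < ∫ ω, (if R ≤ W 0 ω then W 0 ω else 0) ∂μ) :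
    ∃ φ₀ > (0:ℝ), ∀ φ ∈ Set.Ioo (0:ℝ) φ₀,
      Filter.Tendsto (fun n : ℕ => (n : ℝ) ^ C *
          (μ {ω | 2 * (∫ ω', (if R ≤ W 0 ω' then W 0 ω' else 0) ∂μ) * n <
              ∑ i ∈ Finset.range n,
                (if R ≤ W i ω ∧ W i ω < φ * n then W i ω else 0)}).toReal)
        Filter.atTop (nhds 0) := by
  set m := ∫ ω, (if R ≤ W 0 ω then W 0 ω else 0) ∂μ
  have hint : Integrable (fun ω => if R ≤ W 0 ω then W 0 ω else 0) μ := by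
    by_contra h
    exact hpos.ne' (integral_undef h)
  obtain ⟨a, c, β, ha, haα, hc, hβ, hβc, hcβ⟩ := exists_chernoff_exponents hα
  obtain ⟨K, hK⟩ := exists_eventually_le_mul_rpow_neg (T := fun w => μ.real {ω | w < W 0 ω})
    one_lt_two ha haα (fun x y hxy => measureReal_mono fun ω hω => hxy.trans_lt hω)
    (fun _ => measureReal_nonneg) hLpos (hL 2 two_pos) htail
  refine ⟨c * m / C, by positivity, fun φ ⟨hφ, hφ₀⟩ => ?_⟩
  have hCφ : C < c * m / φ := by rwa [lt_div_iff₀ hφ, ← lt_div_iff₀' hC]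
  have hlim : Tendsto (fun n : ℕ => exp 1 * (n : ℝ) ^ (C - c * m / φ)) atTop (𝓝 0) := by
    simpa using ((tendsto_rpow_neg_atTop (sub_pos.2 hCφ)).comp
      tendsto_natCast_atTop_atTop).const_mul (exp 1)
  refine squeeze_zero' (Eventually.of_forall fun n => by positivity) ?_ hlim
  filter_upwards [((tendsto_chernoff_error (m := m) (K := K) hφ.ne' hβc hcβ).comp
      tendsto_natCast_atTop_atTop).eventually_le_const one_pos,
    ((tendsto_rpow_atTop hβ).comp tendsto_natCast_atTop_atTop).eventually hK,
    eventually_gt_atTop 0] with n herr hKn hn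
  calc (n : ℝ) ^ C * μ.real {ω | 2 * m * n < ∑ i ∈ range n,
        if R ≤ W i ω ∧ W i ω < φ * n then W i ω else 0}
      ≤ (n : ℝ) ^ C * (exp 1 * (n : ℝ) ^ (-(c * m / φ))) := by
        gcongr
        exact measureReal_truncatedSum_gt_le hmeas hindep hident hR.le hint le_rfl hc.le hφ hn
          hKn herr
    _ = exp 1 * (n : ℝ) ^ (C - c * m / φ) := by
        rw [sub_eq_add_neg, rpow_add (Nat.cast_pos.2 hn)]; ring

/-- For iid nonnegative `(W_i)` with regularly varying tail of index
`-α`, `α > 1` (`P(W > w) = L(w) w^{-α}` for `w ≥ w₀ > 0`), for every `C > 0` and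
`R > 0` with `E[W 1{W ≥ R}] > 0` there exists `φ₀ > 0` such that for all
`φ ∈ (0, φ₀)`:
`P(∑_{i<n} W_i 1{W_i ∈ [R, φ n)} > 2 E[W 1{W ≥ R}] n) = o(n^{-C})`. -/
theorem stmt_18 {Ω : Type*} [MeasurableSpace Ω] (μ : Measure Ω) [IsProbabilityMeasure μ]
    (W : ℕ → Ω → ℝ) (hmeas : ∀ i, Measurable (W i))
    (hindep : ProbabilityTheory.iIndepFun W μ)
    (hident : ∀ i, Measure.map (W i) μ = Measure.map (W 0) μ)
    (α w₀ : ℝ) (hα : 1 < α) (hw₀ : 0 < w₀)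
    (hWlb : ∀ i, ∀ᵐ ω ∂μ, w₀ ≤ W i ω)
    (L : ℝ → ℝ) (hLpos : ∀ x : ℝ, 0 < L x)
    (hL : ∀ c : ℝ, 0 < c →
        Filter.Tendsto (fun x : ℝ => L (c * x) / L x) Filter.atTop (nhds 1))
    (htail : ∀ w : ℝ, w₀ ≤ w → (μ {ω | w < W 0 ω}).toReal = L w * w ^ (-α))
    (C R : ℝ) (hC : 0 < C) (hR : 0 < R)
    (hpos : 0 < ∫ ω, (if R ≤ W 0 ω then W 0 ω else 0) ∂μ) :
    ∃ φ₀ > (0:ℝ), ∀ φ ∈ Set.Ioo (0:ℝ) φ₀,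
      Filter.Tendsto (fun n : ℕ => (n : ℝ) ^ C *
          (μ {ω | 2 * (∫ ω', (if R ≤ W 0 ω' then W 0 ω' else 0) ∂μ) * n <
              ∑ i ∈ Finset.range n,
                (if R ≤ W i ω ∧ W i ω < φ * n then W i ω else 0)}).toReal)
        Filter.atTop (nhds 0) :=
  stmt_18_general μ W hmeas hindep hident α w₀ hα L hLpos hL htail C R hC hR hpos
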